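/- arXiv:2406.00493 — 2 statements merged into one kernel-verified Lean document; each statement's English description precedes it below -/
import Mathlib

section
/- Under the stated conditions, for every j ∉ A the j-th coordinate of d^ω(β₀^ω, β^ω) satisfies d_j^ω = d̂_j − ξ^ω (X_jᵀ h_{·k} − x_{kj})(y_k − ŷ_k), where X_j is the j-th column of X, x_{kj} the j-th coordinate of x_k, and d̂_j = −X_jᵀ(y − ŷ). -/
/-!
Let `r` be the residual of the reweighted fit and `e = y - ŷ` that of the Lasso fit. Both satisfy
the stationarity equations for the intercept and on `A`, except for an extra term `t x̃_k`,
`t = (1 - ω) r_k`, in those of `r`. As `r - e` lies in the column space of `X̃_A`, projecting onto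
it gives `r = e + t h_{·k}`. Reading this at `k` gives `t = ξ^ω e_k`, and substituting `r` into
`d_j^ω` gives the formula.
-/

open Matrix

namespace Matrix

variable {R m r : Type*} [CommRing R]

noncomputable def hatMatrix [Fintype m] [Fintype r] [DecidableEq r] (M : Matrix m r R) :
    Matrix m m R :=
  M * (Mᵀ * M)⁻¹ * Mᵀ

theorem mulVec_eq_hatMatrix_mulVec [Fintype m] [Fintype r] [DecidableEq r] {M : Matrix m r R}
    (hM : IsUnit (Mᵀ * M).det) {c : r → R} {w : m → R} (h : Mᵀ *ᵥ (M *ᵥ c) = Mᵀ *ᵥ w) :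
    M *ᵥ c = hatMatrix M *ᵥ w := by
  calc M *ᵥ c = M *ᵥ (((Mᵀ * M)⁻¹ * (Mᵀ * M)) *ᵥ c) := by
        rw [nonsing_inv_mul _ hM, one_mulVec]
    _ = hatMatrix M *ᵥ (M *ᵥ c) := by
        simp only [hatMatrix, mulVec_mulVec, Matrix.mul_assoc]
    _ = hatMatrix M *ᵥ w := by
        simp only [hatMatrix, ← mulVec_mulVec, h]

theorem mulVec_eq_mulVec_subtype {κ : Type*} [Fintype κ] {A : Finset κ} {X : Matrix m κ R}
    {XA : Matrix m A R} (hXA : ∀ i (j : A), XA i j = X i j) {β : κ → R}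
    (hβ : ∀ j ∉ A, β j = 0) : X *ᵥ β = XA *ᵥ fun j => β j := by
  ext i
  simp only [mulVec, dotProduct, hXA]
  rw [Finset.sum_coe_sort A (fun j => X i j * β j)]
  exact (Finset.sum_subset (Finset.subset_univ A) fun j _ hj => by rw [hβ j hj, mul_zero]).symm

end Matrix

section InterceptDesign

variable {n : ℕ} {ι : Type*}

def withIntercept (Z : Matrix (Fin n) ι ℝ) : Matrix (Fin n) (Fin 1 ⊕ ι) ℝ :=
  fromCols (of fun _ _ => 1) Z

theorem withIntercept_mulVec_sumElim [Fintype ι] (Z : Matrix (Fin n) ι ℝ) (a : ℝ) (b : ι → ℝ)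
    (i : Fin n) : (withIntercept Z *ᵥ Sum.elim (fun _ => a) b) i = a + (Z *ᵥ b) i := by
  simp [withIntercept, mulVec, dotProduct]

theorem transpose_withIntercept_mulVec (Z : Matrix (Fin n) ι ℝ) (v : Fin n → ℝ) :
    (withIntercept Z)ᵀ *ᵥ v = Sum.elim (fun _ => ∑ i, v i) (Zᵀ *ᵥ v) := by
  ext (_ | _) <;> simp [withIntercept, mulVec, dotProduct]

theorem isUnit_det_gram_withIntercept [Fintype ι] [DecidableEq ι] (hn : 0 < n)
    {Z : Matrix (Fin n) ι ℝ} (hZ : ∀ j, ∑ i, Z i j = 0) (hdet : IsUnit (Zᵀ * Z).det) :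
    IsUnit ((withIntercept Z)ᵀ * withIntercept Z).det := by
  have hcross : (of fun (_ : Fin n) (_ : Fin 1) => (1 : ℝ))ᵀ * Z = 0 := by
    ext _ j; simpa [mul_apply] using hZ j
  rw [withIntercept, transpose_fromCols, fromRows_mul_fromCols, hcross,
    ← transpose_transpose (Zᵀ * _), transpose_mul, transpose_transpose, hcross, transpose_zero,
    det_fromBlocks_zero₂₁]
  refine IsUnit.mul ?_ hdet
  simp [det_unique, mul_apply, hn.ne']

end InterceptDesign

section LassoFit

variable {n : ℕ} {ι : Type*} [Fintype ι] [DecidableEq ι]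

noncomputable def lassoFit (Z : Matrix (Fin n) ι ℝ) (y : Fin n → ℝ) (lam : ℝ) (s : ι → ℝ) :
    Fin n → ℝ :=
  fun i => (∑ i', y i') / n + (Z *ᵥ ((Zᵀ * Z)⁻¹ *ᵥ (Zᵀ *ᵥ y - lam • s))) i

theorem sum_sub_lassoFit (hn : 0 < n) {Z : Matrix (Fin n) ι ℝ} (hZ : ∀ j, ∑ i, Z i j = 0)
    (y : Fin n → ℝ) (lam : ℝ) (s : ι → ℝ) : ∑ i, (y i - lassoFit Z y lam s i) = 0 := by
  have hZb (b : ι → ℝ) : ∑ i, (Z *ᵥ b) i = 0 := by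
    simp only [mulVec, dotProduct]
    rw [Finset.sum_comm]
    simp [← Finset.sum_mul, hZ]
  simp only [lassoFit, Finset.sum_sub_distrib, Finset.sum_add_distrib, hZb, Finset.sum_const,
    Finset.card_univ, Fintype.card_fin, nsmul_eq_mul]
  field_simp
  ring

theorem transpose_mulVec_sub_lassoFit {Z : Matrix (Fin n) ι ℝ} (hZ : ∀ j, ∑ i, Z i j = 0)
    (hdet : IsUnit (Zᵀ * Z).det) (y : Fin n → ℝ) (lam : ℝ) (s : ι → ℝ) :
    Zᵀ *ᵥ (y - lassoFit Z y lam s) = lam • s := by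
  have hconst (a : ℝ) : Zᵀ *ᵥ (fun _ => a) = 0 := by
    ext j; simp [mulVec, dotProduct, ← Finset.sum_mul, hZ]
  have hfit : lassoFit Z y lam s
      = (fun _ => (∑ i, y i) / n) + Z *ᵥ ((Zᵀ * Z)⁻¹ *ᵥ (Zᵀ *ᵥ y - lam • s)) := rfl
  rw [hfit, mulVec_sub, mulVec_add, hconst, mulVec_mulVec, mulVec_mulVec,
    mul_nonsing_inv _ hdet, one_mulVec]
  abel

theorem eq_sub_lassoFit_add_mul_hatMatrix (hn : 0 < n) {Z : Matrix (Fin n) ι ℝ}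
    (hZ : ∀ j, ∑ i, Z i j = 0) (hdet : IsUnit (Zᵀ * Z).det) {y r : Fin n → ℝ} {lam t : ℝ}
    {s : ι → ℝ} {k : Fin n} {c : Fin 1 ⊕ ι → ℝ}
    (hcol : r - (y - lassoFit Z y lam s) = withIntercept Z *ᵥ c) (hsum : ∑ i, r i = t)
    (hgrad : ∀ j, (Zᵀ *ᵥ r) j = lam * s j + t * Z k j) (i : Fin n) :
    r i = y i - lassoFit Z y lam s i + t * hatMatrix (withIntercept Z) i k := by
  have hnormal : (withIntercept Z)ᵀ *ᵥ (r - (y - lassoFit Z y lam s))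
      = (withIntercept Z)ᵀ *ᵥ Pi.single k t := by
    rw [transpose_withIntercept_mulVec, transpose_withIntercept_mulVec]
    congr 1
    · ext
      have hfit := sum_sub_lassoFit hn hZ y lam s
      simp only [Pi.sub_apply, Finset.sum_sub_distrib] at hfit ⊢
      simp [hsum, hfit]
    · ext j
      simp [mulVec_sub, transpose_mulVec_sub_lassoFit hZ hdet, hgrad, mulVec_single, mul_comm]
  have hproj : r - (y - lassoFit Z y lam s) = hatMatrix (withIntercept Z) *ᵥ Pi.single k t := by
    rw [hcol] at hnormal ⊢
    exact mulVec_eq_hatMatrix_mulVec (isUnit_det_gram_withIntercept hn hZ hdet) hnormal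
  have hi := congrFun hproj i
  simp only [Pi.sub_apply, mulVec_single, Pi.smul_apply, col_apply, MulOpposite.smul_eq_mul_unop,
    MulOpposite.unop_op] at hi
  linear_combination hi

end LassoFit

theorem reweighted_gradient_eq {m : Type*} [Fintype m] {r e h x : m → ℝ} {a : ℝ} {k : m}
    (hden : 1 - a * h k ≠ 0) (hshift : ∀ i, r i = e i + a * r k * h i) :
    -(∑ i, x i * r i) + a * x k * r k
      = -(∑ i, x i * e i) - a / (1 - a * h k) * ((∑ i, x i * h i) - x k) * e k := by
  have hrk : a * r k = a / (1 - a * h k) * e k := by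
    rw [div_mul_eq_mul_div, eq_div_iff hden]
    linear_combination a * hshift k
  have hsum : ∑ i, x i * r i = ∑ i, x i * e i + a * r k * ∑ i, x i * h i := by
    rw [Finset.mul_sum, ← Finset.sum_add_distrib]
    exact Finset.sum_congr rfl fun i _ => by rw [hshift i]; ring
  linear_combination -hsum + (x k - ∑ i, x i * h i) * hrk

theorem stmt10_general {n p : ℕ} (hn : 0 < n)
    (X : Matrix (Fin n) (Fin p) ℝ) (y : Fin n → ℝ)
    (lam : ℝ) (k : Fin n) (ω : ℝ)
    (hcent : ∀ j, ∑ i, X i j = 0)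
    (A : Finset (Fin p))
    (XA : Matrix (Fin n) {j // j ∈ A} ℝ)
    (hXA : ∀ i (j : {j // j ∈ A}), XA i j = X i j.1)
    (hinv : IsUnit (XAᵀ * XA).det)
    (sA : {j // j ∈ A} → ℝ)
    (betahat : {j // j ∈ A} → ℝ)
    (hbetahat : betahat = (XAᵀ * XA)⁻¹.mulVec (XAᵀ.mulVec y - lam • sA))
    (beta0hat : ℝ) (hbeta0hat : beta0hat = (∑ i, y i) / n)
    (yhat : Fin n → ℝ) (hyhat : ∀ i, yhat i = beta0hat + ∑ j, XA i j * betahat j)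
    (Xt : Matrix (Fin n) (Fin 1 ⊕ {j // j ∈ A}) ℝ)
    (hXt : Xt = Matrix.fromCols (Matrix.of fun _ (_ : Fin 1) => (1:ℝ)) XA)
    (H : Matrix (Fin n) (Fin n) ℝ) (hH : H = Xt * (Xtᵀ * Xt)⁻¹ * Xtᵀ)
    (hden : 1 - (1 - ω) * H k k ≠ 0)
    (ξ : ℝ) (hξ : ξ = (1 - ω) / (1 - (1 - ω) * H k k))
    (β0ω : ℝ) (βω : Fin p → ℝ)
    (hzero : ∀ j ∉ A, βω j = 0)
    (hd0 : -(∑ i, (y i - β0ω - ∑ j, X i j * βω j))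
        + (1 - ω) * (y k - β0ω - ∑ j, X k j * βω j) = 0)
    (hdA : ∀ j : {j // j ∈ A},
        -(∑ i, X i j.1 * (y i - β0ω - ∑ j', X i j' * βω j'))
          + (1 - ω) * X k j.1 * (y k - β0ω - ∑ j', X k j' * βω j') = -lam * sA j) :
    ∀ j ∉ A,
      -(∑ i, X i j * (y i - β0ω - ∑ j', X i j' * βω j'))
          + (1 - ω) * X k j * (y k - β0ω - ∑ j', X k j' * βω j')
        = -(∑ i, X i j * (y i - yhat i))
            - ξ * ((∑ i, X i j * H i k) - X k j) * (y k - yhat k) := by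
  intro j _
  have hXAcent (j : {j // j ∈ A}) : ∑ i, XA i j = 0 := by simpa only [hXA] using hcent j
  set r : Fin n → ℝ := y - (fun _ => β0ω) - X *ᵥ βω with hr
  have hcol : r - (y - lassoFit XA y lam sA) = withIntercept XA *ᵥ
      Sum.elim (fun _ => beta0hat - β0ω) (betahat - fun j' : {j // j ∈ A} => βω j') := by
    ext i
    rw [withIntercept_mulVec_sumElim, mulVec_sub, ← mulVec_eq_mulVec_subtype hXA hzero, hbeta0hat,
      hbetahat]
    simp only [hr, Pi.sub_apply, lassoFit]
    ring
  have hgrad (j' : {j // j ∈ A}) : (XAᵀ *ᵥ r) j' = lam * sA j' + (1 - ω) * r k * XA k j' := by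
    have h : -(XAᵀ *ᵥ r) j' + (1 - ω) * XA k j' * r k = -lam * sA j' := by
      have hdA' := hdA j'
      simp only [← hXA] at hdA'
      exact hdA'
    linear_combination -h
  have hshift := eq_sub_lassoFit_add_mul_hatMatrix hn hXAcent hinv hcol (neg_add_eq_zero.mp hd0)
    hgrad
  have hfit : yhat = lassoFit XA y lam sA := by
    funext i; rw [hyhat, hbetahat, hbeta0hat]; rfl
  subst hfit hH hXt hξ
  exact reweighted_gradient_eq (r := r) (h := fun i => hatMatrix (withIntercept XA) i k) hden
    hshift

/-- Case-weight adjusted Lasso gradient on inactive coordinates: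
`d_j^ω = d̂_j - ξ^ω (X_jᵀ h_{·k} - x_{kj})(y_k - ŷ_k)` for `j ∉ A`. -/
theorem stmt10 {n p : ℕ} (hn : 0 < n) (hp : 0 < p)
    (X : Matrix (Fin n) (Fin p) ℝ) (y : Fin n → ℝ)
    (lam : ℝ) (hlam : 0 < lam) (k : Fin n) (ω : ℝ) (hω : ω ∈ Set.Icc (0:ℝ) 1)
    (hcent : ∀ j, ∑ i, X i j = 0)
    (A : Finset (Fin p))
    (XA : Matrix (Fin n) {j // j ∈ A} ℝ)
    (hXA : ∀ i (j : {j // j ∈ A}), XA i j = X i j.1)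
    (hinv : IsUnit (XAᵀ * XA).det)
    (sA : {j // j ∈ A} → ℝ) (hsA : ∀ j, sA j = 1 ∨ sA j = -1)
    (betahat : {j // j ∈ A} → ℝ)
    (hbetahat : betahat = (XAᵀ * XA)⁻¹.mulVec (XAᵀ.mulVec y - lam • sA))
    (beta0hat : ℝ) (hbeta0hat : beta0hat = (∑ i, y i) / n)
    (yhat : Fin n → ℝ) (hyhat : ∀ i, yhat i = beta0hat + ∑ j, XA i j * betahat j)
    (Xt : Matrix (Fin n) (Fin 1 ⊕ {j // j ∈ A}) ℝ)
    (hXt : Xt = Matrix.fromCols (Matrix.of fun _ (_ : Fin 1) => (1:ℝ)) XA)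
    (H : Matrix (Fin n) (Fin n) ℝ) (hH : H = Xt * (Xtᵀ * Xt)⁻¹ * Xtᵀ)
    (hden : 1 - (1 - ω) * H k k ≠ 0) (hnω : (n : ℝ) - 1 + ω ≠ 0)
    (ξ : ℝ) (hξ : ξ = (1 - ω) / (1 - (1 - ω) * H k k))
    (β0ω : ℝ) (βω : Fin p → ℝ)
    (hzero : ∀ j ∉ A, βω j = 0)
    (hd0 : -(∑ i, (y i - β0ω - ∑ j, X i j * βω j))
        + (1 - ω) * (y k - β0ω - ∑ j, X k j * βω j) = 0)
    (hdA : ∀ j : {j // j ∈ A},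
        -(∑ i, X i j.1 * (y i - β0ω - ∑ j', X i j' * βω j'))
          + (1 - ω) * X k j.1 * (y k - β0ω - ∑ j', X k j' * βω j') = -lam * sA j) :
    ∀ j ∉ A,
      -(∑ i, X i j * (y i - β0ω - ∑ j', X i j' * βω j'))
          + (1 - ω) * X k j * (y k - β0ω - ∑ j', X k j' * βω j')
        = -(∑ i, X i j * (y i - yhat i))
            - ξ * ((∑ i, X i j * H i k) - X k j) * (y k - yhat k) :=
  stmt10_general hn X y lam k ω hcent A XA hXA hinv sA betahat hbetahat beta0hat hbeta0hat yhat
    hyhat Xt hXt H hH hden ξ hξ β0ω βω hzero hd0 hdA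
end

section
/- Under the stated conditions, the k-th residual of the case-weight adjusted fit ŷ^ω := β₀^ω 1ₙ + X β^ω satisfies y_k − ŷ_k^ω = (y_k − ŷ_k)/(1 − (1−ω)h_kk). -/
/-!
Stack intercept and active coefficients into one vector for the design `X̃ = (1, X_A)`.
The stationarity conditions of the case-weighted problem read
`X̃ᵀ (y - X̃ b^ω) = (0, λ s_A) + (1 - ω) r x̃_k` with `r = y_k - ŷ_k^ω`, while `(ȳ, β̂_A)` solves the
same equations without the last term; centering makes `X̃ᵀ X̃` block diagonal, which is why the
intercept of the unweighted fit is just `ȳ`. Subtracting the two systems gives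
`b̂ - b^ω = (1 - ω) r (X̃ᵀ X̃)⁻¹ x̃_k`, hence `r = (y_k - ŷ_k) + (1 - ω) r h_kk`; solve for `r`.
-/

open Matrix

theorem Fintype.sum_eq_sum_coe_sort_of_eq_zero {ι M : Type*} [Fintype ι] [AddCommMonoid M]
    {A : Finset ι} {f : ι → M} (hf : ∀ j ∉ A, f j = 0) :
    ∑ j, f j = ∑ j : {j // j ∈ A}, f j := by
  rw [Finset.sum_coe_sort A f]
  exact (Fintype.sum_subset fun j hj => by_contra fun hA => hj (hf j hA)).symm

namespace Matrix

variable {m q R : Type*} [CommRing R]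

theorem residual_eq_of_normal_eq [Fintype m] [Fintype q] [DecidableEq q] (M : Matrix m q R)
    (hM : IsUnit (Mᵀ * M).det) {y : m → R} {b b' v : q → R} {c : R} {k : m}
    (hb : Mᵀ *ᵥ (y - M *ᵥ b) = v) (hb' : Mᵀ *ᵥ (y - M *ᵥ b') = v + c • M k) :
    (y - M *ᵥ b') k = (y - M *ᵥ b) k + c * (M * (Mᵀ * M)⁻¹ * Mᵀ) k k := by
  have hdiff : (Mᵀ * M) *ᵥ (b - b') = c • M k := by
    have : M *ᵥ (b - b') = (y - M *ᵥ b') - (y - M *ᵥ b) := by rw [mulVec_sub]; abel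
    rw [← mulVec_mulVec, this, mulVec_sub, hb, hb', add_sub_cancel_left]
  have hsolve : b - b' = c • ((Mᵀ * M)⁻¹ *ᵥ M k) := by
    rw [← mulVec_smul, ← hdiff, mulVec_mulVec, nonsing_inv_mul _ hM, one_mulVec]
  have hleverage : (M * (Mᵀ * M)⁻¹ * Mᵀ) k k = (M *ᵥ ((Mᵀ * M)⁻¹ *ᵥ M k)) k := by
    rw [mulVec_mulVec]; rfl
  have hresid : (y - M *ᵥ b') - (y - M *ᵥ b) = c • M *ᵥ ((Mᵀ * M)⁻¹ *ᵥ M k) := by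
    rw [← mulVec_smul, ← hsolve, mulVec_sub]; abel
  rw [hleverage, ← smul_eq_mul, ← Pi.smul_apply, ← hresid, Pi.sub_apply _ (y - M *ᵥ b),
    add_sub_cancel]

theorem fromCols_transpose_mul_self_of_orthogonal {q₁ q₂ : Type*} [Fintype m]
    (A : Matrix m q₁ R) (B : Matrix m q₂ R) (h : Aᵀ * B = 0) :
    (fromCols A B)ᵀ * fromCols A B = fromBlocks (Aᵀ * A) 0 0 (Bᵀ * B) := by
  rw [transpose_fromCols, fromRows_mul_fromCols, h, ← transpose_transpose (Bᵀ * A),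
    transpose_mul, transpose_transpose, h, transpose_zero]

def IsCentered [Fintype m] (B : Matrix m q R) : Prop := ∀ j, ∑ i, B i j = 0

theorem IsCentered.sum_mulVec [Fintype m] [Fintype q] {B : Matrix m q R} (hB : B.IsCentered)
    (β : q → R) : ∑ i, (B *ᵥ β) i = 0 := by
  have : 1 ᵥ* B = 0 := funext fun j => by simp [vecMul, dotProduct, hB j]
  rw [← one_dotProduct, dotProduct_mulVec, this, zero_dotProduct]

theorem IsCentered.transpose_mulVec_const [Fintype m] {B : Matrix m q R} (hB : B.IsCentered)
    (a : R) : Bᵀ *ᵥ (fun _ => a) = 0 := by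
  ext j
  simp [mulVec, dotProduct, ← Finset.sum_mul, hB j]

def interceptDesign (B : Matrix m q R) : Matrix m (Fin 1 ⊕ q) R :=
  fromCols (of fun _ _ => 1) B

theorem interceptDesign_mulVec_sumElim [Fintype q] (B : Matrix m q R) (a : R) (β : q → R) :
    interceptDesign B *ᵥ Sum.elim (fun _ => a) β = fun i => a + (B *ᵥ β) i := by
  rw [interceptDesign, fromCols_mulVec_sumElim]
  ext i
  simp [mulVec, dotProduct]

theorem interceptDesign_transpose_mulVec [Fintype m] (B : Matrix m q R) (u : m → R) :
    (interceptDesign B)ᵀ *ᵥ u = Sum.elim (fun _ => ∑ i, u i) (Bᵀ *ᵥ u) := by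
  rw [interceptDesign, transpose_fromCols, fromRows_mulVec]
  congr 1
  ext
  simp [mulVec, dotProduct]

theorem IsCentered.isUnit_det_interceptDesign_gram [Fintype m] [Fintype q] [DecidableEq q]
    {B : Matrix m q R} (hB : B.IsCentered) (hm : IsUnit (Fintype.card m : R))
    (hBB : IsUnit (Bᵀ * B).det) :
    IsUnit ((interceptDesign B)ᵀ * interceptDesign B).det := by
  have horth : (of fun (_ : m) (_ : Fin 1) => (1 : R))ᵀ * B = 0 := by
    ext _ j
    simp [mul_apply, hB j]
  rw [interceptDesign, fromCols_transpose_mul_self_of_orthogonal _ _ horth, det_fromBlocks_zero₂₁,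
    det_unique]
  simpa [mul_apply] using hm.mul hBB

theorem IsCentered.interceptDesign_normal_eq {K : Type*} [Field K] [Fintype m] [Fintype q]
    [DecidableEq q] {B : Matrix m q K} (hB : B.IsCentered) (hm : (Fintype.card m : K) ≠ 0)
    (hBB : IsUnit (Bᵀ * B).det) (y : m → K) (v : q → K) :
    (interceptDesign B)ᵀ *ᵥ (y - interceptDesign B *ᵥ
        Sum.elim (fun _ => (∑ i, y i) / Fintype.card m) ((Bᵀ * B)⁻¹ *ᵥ (Bᵀ *ᵥ y - v)))
      = Sum.elim (0 : Fin 1 → K) v := by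
  rw [interceptDesign_mulVec_sumElim, interceptDesign_transpose_mulVec]
  congr 1
  · ext
    simp only [Pi.sub_apply, Finset.sum_sub_distrib, Finset.sum_add_distrib, hB.sum_mulVec,
      Finset.sum_const, Finset.card_univ, nsmul_eq_mul, Pi.zero_apply]
    field_simp
    ring
  · change Bᵀ *ᵥ (y - ((fun _ => _) + B *ᵥ _)) = v
    rw [mulVec_sub, mulVec_add, hB.transpose_mulVec_const, mulVec_mulVec, mulVec_mulVec,
      mul_nonsing_inv _ hBB, one_mulVec]
    abel

end Matrix

theorem stmt11_general {n p : ℕ} (hn : 0 < n)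
    (X : Matrix (Fin n) (Fin p) ℝ) (y : Fin n → ℝ)
    (lam : ℝ) (k : Fin n) (ω : ℝ)
    (hcent : ∀ j, ∑ i, X i j = 0)
    (A : Finset (Fin p))
    (XA : Matrix (Fin n) {j // j ∈ A} ℝ)
    (hXA : ∀ i (j : {j // j ∈ A}), XA i j = X i j.1)
    (hinv : IsUnit (XAᵀ * XA).det)
    (sA : {j // j ∈ A} → ℝ)
    (betahat : {j // j ∈ A} → ℝ)
    (hbetahat : betahat = (XAᵀ * XA)⁻¹.mulVec (XAᵀ.mulVec y - lam • sA))
    (beta0hat : ℝ) (hbeta0hat : beta0hat = (∑ i, y i) / n)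
    (yhat : Fin n → ℝ) (hyhat : ∀ i, yhat i = beta0hat + ∑ j, XA i j * betahat j)
    (Xt : Matrix (Fin n) (Fin 1 ⊕ {j // j ∈ A}) ℝ)
    (hXt : Xt = Matrix.fromCols (Matrix.of fun _ (_ : Fin 1) => (1:ℝ)) XA)
    (H : Matrix (Fin n) (Fin n) ℝ) (hH : H = Xt * (Xtᵀ * Xt)⁻¹ * Xtᵀ)
    (hden : 1 - (1 - ω) * H k k ≠ 0)
    (β0ω : ℝ) (βω : Fin p → ℝ)
    (hzero : ∀ j ∉ A, βω j = 0)
    (hd0 : -(∑ i, (y i - β0ω - ∑ j, X i j * βω j))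
        + (1 - ω) * (y k - β0ω - ∑ j, X k j * βω j) = 0)
    (hdA : ∀ j : {j // j ∈ A},
        -(∑ i, X i j.1 * (y i - β0ω - ∑ j', X i j' * βω j'))
          + (1 - ω) * X k j.1 * (y k - β0ω - ∑ j', X k j' * βω j') = -lam * sA j) :
    y k - (β0ω + ∑ j, X k j * βω j) = (y k - yhat k) / (1 - (1 - ω) * H k k) := by
  have hcentA : XA.IsCentered := fun j => by simpa only [hXA] using hcent j
  have hn' : (Fintype.card (Fin n) : ℝ) ≠ 0 := by simpa using hn.ne'
  set bω : {j // j ∈ A} → ℝ := fun j => βω j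
  have hfit : ∀ i, ∑ j, X i j * βω j = (XA *ᵥ bω) i := fun i => by
    rw [Fintype.sum_eq_sum_coe_sort_of_eq_zero fun j hj => by rw [hzero j hj, mul_zero]]
    simp [mulVec, dotProduct, hXA, bω]
  set r := y k - (β0ω + (XA *ᵥ bω) k)
  replace hXt : Xt = interceptDesign XA := hXt
  subst hXt hH
  have hweighted : (interceptDesign XA)ᵀ *ᵥ (y - interceptDesign XA *ᵥ Sum.elim (fun _ => β0ω) bω)
      = Sum.elim (0 : Fin 1 → ℝ) (lam • sA) + ((1 - ω) * r) • interceptDesign XA k := by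
    rw [interceptDesign_mulVec_sumElim, interceptDesign_transpose_mulVec]
    ext (_ | j)
    · simp only [hfit, sub_sub] at hd0
      simp only [interceptDesign, Sum.elim_inl, Pi.sub_apply, Pi.add_apply, Pi.smul_apply,
        fromCols_apply_inl, of_apply, Pi.zero_apply, smul_eq_mul]
      linear_combination -hd0
    · have hdj := hdA j
      simp only [hfit, sub_sub, ← hXA] at hdj
      simp only [r, interceptDesign, mulVec, dotProduct, transpose_apply, Pi.sub_apply,
        Sum.elim_inr, Pi.add_apply, Pi.smul_apply, fromCols_apply_inr, smul_eq_mul] at hdj ⊢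
      linear_combination -hdj
  have hfull := hcentA.interceptDesign_normal_eq hn' hinv y (lam • sA)
  rw [← hbetahat, Fintype.card_fin, ← hbeta0hat] at hfull
  have hresidual := residual_eq_of_normal_eq _ (hcentA.isUnit_det_interceptDesign_gram
    (isUnit_iff_ne_zero.mpr hn') hinv) hfull hweighted
  rw [interceptDesign_mulVec_sumElim, interceptDesign_mulVec_sumElim] at hresidual
  have hyhatk : yhat k = beta0hat + (XA *ᵥ betahat) k := hyhat k
  rw [hfit, eq_div_iff hden, hyhatk]
  simp only [Pi.sub_apply] at hresidual
  linear_combination hresidual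

/-- Case-weight adjusted residual for case `k`:
`y_k - ŷ_k^ω = (y_k - ŷ_k)/(1-(1-ω)h_kk)`. -/
theorem stmt11 {n p : ℕ} (hn : 0 < n) (hp : 0 < p)
    (X : Matrix (Fin n) (Fin p) ℝ) (y : Fin n → ℝ)
    (lam : ℝ) (hlam : 0 < lam) (k : Fin n) (ω : ℝ) (hω : ω ∈ Set.Icc (0:ℝ) 1)
    (hcent : ∀ j, ∑ i, X i j = 0)
    (A : Finset (Fin p))
    (XA : Matrix (Fin n) {j // j ∈ A} ℝ)
    (hXA : ∀ i (j : {j // j ∈ A}), XA i j = X i j.1)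
    (hinv : IsUnit (XAᵀ * XA).det)
    (sA : {j // j ∈ A} → ℝ) (hsA : ∀ j, sA j = 1 ∨ sA j = -1)
    (betahat : {j // j ∈ A} → ℝ)
    (hbetahat : betahat = (XAᵀ * XA)⁻¹.mulVec (XAᵀ.mulVec y - lam • sA))
    (beta0hat : ℝ) (hbeta0hat : beta0hat = (∑ i, y i) / n)
    (yhat : Fin n → ℝ) (hyhat : ∀ i, yhat i = beta0hat + ∑ j, XA i j * betahat j)
    (Xt : Matrix (Fin n) (Fin 1 ⊕ {j // j ∈ A}) ℝ)
    (hXt : Xt = Matrix.fromCols (Matrix.of fun _ (_ : Fin 1) => (1:ℝ)) XA)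
    (H : Matrix (Fin n) (Fin n) ℝ) (hH : H = Xt * (Xtᵀ * Xt)⁻¹ * Xtᵀ)
    (hden : 1 - (1 - ω) * H k k ≠ 0) (hnω : (n : ℝ) - 1 + ω ≠ 0)
    (ξ : ℝ) (hξ : ξ = (1 - ω) / (1 - (1 - ω) * H k k))
    (β0ω : ℝ) (βω : Fin p → ℝ)
    (hzero : ∀ j ∉ A, βω j = 0)
    (hd0 : -(∑ i, (y i - β0ω - ∑ j, X i j * βω j))
        + (1 - ω) * (y k - β0ω - ∑ j, X k j * βω j) = 0)
    (hdA : ∀ j : {j // j ∈ A},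
        -(∑ i, X i j.1 * (y i - β0ω - ∑ j', X i j' * βω j'))
          + (1 - ω) * X k j.1 * (y k - β0ω - ∑ j', X k j' * βω j') = -lam * sA j) :
    y k - (β0ω + ∑ j, X k j * βω j) = (y k - yhat k) / (1 - (1 - ω) * H k k) :=
  stmt11_general hn X y lam k ω hcent A XA hXA hinv sA betahat hbetahat beta0hat hbeta0hat yhat
    hyhat Xt hXt H hH hden β0ω βω hzero hd0 hdA
end
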